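/- arXiv:2501.06074 — 6 statements merged into one kernel-verified Lean document; each statement's English description precedes it below -/
import Mathlib

section
/- Let S ∈ Sym²(ℝ^n) have rank exactly r, and let S(r;n) be the manifold of n×n symmetric matrices of rank exactly r, whose tangent space at S is T_S = {SX + XᵀS : X ∈ ℝ^{n×n}}. For a smooth function ℓ : Sym²(ℝ^n) → ℝ, the point S is a critical point of the restriction ℓ|_{S(r;n)} if and only if ∇ℓ(S)·S = 0 (matrix product zero). -/
/-- Let `S ∈ Sym²(ℝ^n)` have rank exactly `r`, and let `ℓ` be a smooth function on the
space of `n × n` matrices (represented as `Fin n → Fin n → ℝ` so as to carry the product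
norm), with gradient `G` at `S` with respect to the Frobenius inner product, `G` being
symmetric. Then `S` is a critical point of the restriction of `ℓ` to the manifold
`S(r;n)` of symmetric rank-`r` matrices — i.e. the derivative of `ℓ` at `S` vanishes on
the tangent space `{SX + XᵀS : X ∈ ℝ^{n×n}}` — if and only if `G ⬝ S = 0`. -/
theorem stmt8 (n r : ℕ) (ℓ : (Fin n → Fin n → ℝ) → ℝ) (hℓ : ContDiff ℝ (⊤ : ℕ∞) ℓ)
    (S : Fin n → Fin n → ℝ) (hSsym : ∀ a b, S a b = S b a)
    (hrank : (Matrix.of S).rank = r)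
    (G : Fin n → Fin n → ℝ) (hGsym : ∀ a b, G a b = G b a)
    (hgrad : ∀ V, fderiv ℝ ℓ S V = ∑ a, ∑ b, G a b * V a b) :
    (∀ X : Fin n → Fin n → ℝ,
        fderiv ℝ ℓ S (fun a b => (∑ c, S a c * X c b) + (∑ c, X c a * S c b)) = 0)
      ↔ (∀ a b, ∑ c, G a c * S c b = 0) := by
  have key : ∀ X : Fin n → Fin n → ℝ,
      (∑ a, ∑ b, G a b * ((∑ c, S a c * X c b) + (∑ c, X c a * S c b)))
        = 2 * ∑ p, ∑ q, X p q * (∑ c, G q c * S c p) := by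
    intro X
    have T1 : (∑ a, ∑ b, ∑ c, G a b * (S a c * X c b))
        = ∑ p, ∑ q, ∑ c, X p q * (G q c * S c p) := by
      rw [Finset.sum_comm]
      rw [Finset.sum_congr rfl fun b _ => Finset.sum_comm]
      rw [Finset.sum_comm]
      refine Finset.sum_congr rfl fun p _ => Finset.sum_congr rfl fun q _ =>
        Finset.sum_congr rfl fun c _ => ?_
      rw [hGsym c q]
      ring
    have T2 : (∑ a, ∑ b, ∑ c, G a b * (X c a * S c b))
        = ∑ p, ∑ q, ∑ c, X p q * (G q c * S c p) := by
      rw [Finset.sum_congr rfl fun a _ => Finset.sum_comm]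
      rw [Finset.sum_comm]
      refine Finset.sum_congr rfl fun p _ => Finset.sum_congr rfl fun q _ =>
        Finset.sum_congr rfl fun c _ => ?_
      rw [hSsym c p]
      ring
    calc (∑ a, ∑ b, G a b * ((∑ c, S a c * X c b) + (∑ c, X c a * S c b)))
        = (∑ a, ∑ b, ∑ c, G a b * (S a c * X c b))
          + ∑ a, ∑ b, ∑ c, G a b * (X c a * S c b) := by
          rw [← Finset.sum_add_distrib]
          refine Finset.sum_congr rfl fun a _ => ?_
          rw [← Finset.sum_add_distrib]
          refine Finset.sum_congr rfl fun b _ => ?_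
          rw [mul_add, Finset.mul_sum, Finset.mul_sum]
      _ = 2 * ∑ p, ∑ q, ∑ c, X p q * (G q c * S c p) := by rw [T1, T2]; ring
      _ = 2 * ∑ p, ∑ q, X p q * (∑ c, G q c * S c p) := by
          congr 1
          exact Finset.sum_congr rfl fun p _ => Finset.sum_congr rfl fun q _ =>
            (Finset.mul_sum _ _ _).symm
  constructor
  · intro h a b
    have h1 := h (fun p q => ∑ c, G q c * S c p)
    rw [hgrad, key] at h1
    have h2 : (∑ p, ∑ q, (∑ c, G q c * S c p) * (∑ c, G q c * S c p)) = 0 := by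
      linarith
    have h3 : ∀ p ∈ Finset.univ, ∀ q ∈ (Finset.univ : Finset (Fin n)),
        (∑ c, G q c * S c p) * (∑ c, G q c * S c p) = 0 := by
      intro p _ q _
      have := (Finset.sum_eq_zero_iff_of_nonneg (fun p _ =>
        Finset.sum_nonneg fun q _ => mul_self_nonneg _)).mp h2 p (Finset.mem_univ p)
      exact (Finset.sum_eq_zero_iff_of_nonneg (fun q _ => mul_self_nonneg _)).mp this
        q (Finset.mem_univ q)
    exact mul_self_eq_zero.mp (h3 b (Finset.mem_univ b) a (Finset.mem_univ a))
  · intro h X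
    rw [hgrad, key]
    have : ∀ p q : Fin n, (∑ c, G q c * S c p) = 0 := fun p q => h q p
    simp [this]
end

section
/- The orthogonal complement (with respect to the Frobenius inner product) of the tangent space T_S S(r;n) = {SX + XᵀS : X ∈ ℝ^{n×n}} inside the symmetric matrices equals {A ∈ Sym²(ℝ^n) : A·S = 0}. -/
open Matrix

namespace Matrix

variable {ι R : Type*} [Fintype ι] [CommRing R]

theorem trace_mul_transpose_mul_of_isSymm {A S : Matrix ι ι R} (hA : A.IsSymm) (hS : S.IsSymm)
    (X : Matrix ι ι R) : (A * (Xᵀ * S)).trace = (A * S * X).trace := by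
  rw [← trace_transpose, transpose_mul, transpose_mul, transpose_transpose, hS.eq, hA.eq,
    trace_mul_comm, Matrix.mul_assoc]

theorem trace_mul_symmetrized_of_isSymm {A S : Matrix ι ι R} (hA : A.IsSymm) (hS : S.IsSymm)
    (X : Matrix ι ι R) : (A * (S * X + Xᵀ * S)).trace = 2 * (A * S * X).trace := by
  rw [Matrix.mul_add, trace_add, trace_mul_transpose_mul_of_isSymm hA hS, ← Matrix.mul_assoc,
    two_mul]

end Matrix

/-- For a symmetric matrix `S`, a symmetric matrix `A` is Frobenius-orthogonal to the
tangent space `T_S S(r;n) = {SX + XᵀS : X ∈ ℝ^{n×n}}` if and only if `A * S = 0`. -/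
theorem stmt9 (n : ℕ) (S : Matrix (Fin n) (Fin n) ℝ) (hS : S.IsSymm)
    (A : Matrix (Fin n) (Fin n) ℝ) (hA : A.IsSymm) :
    (∀ X : Matrix (Fin n) (Fin n) ℝ, (A * (S * X + Xᵀ * S)).trace = 0)
      ↔ A * S = 0 := by
  simp only [trace_mul_symmetrized_of_isSymm hA hS, mul_eq_zero, two_ne_zero, false_or]
  refine ⟨fun h => ?_, fun h X => by rw [h, Matrix.zero_mul, trace_zero]⟩
  -- test against `X = (A S)ᵀ`: the trace becomes the squared Frobenius norm of `A S`
  have h_norm := h (A * S)ᵀ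
  rwa [← conjTranspose_eq_transpose_of_trivial, trace_mul_conjTranspose_self_eq_zero_iff] at h_norm
end

section
/- (Eckart–Young for symmetric matrices, critical point characterization) Let T ∈ Sym²(ℝ^n) be invertible with n distinct eigenvalues and eigendecomposition T = U Σ Uᵀ. Then S is a critical point of S ↦ ‖T−S‖_F² restricted to the manifold of symmetric matrices of rank exactly r if and only if S = U Σ_I Uᵀ for some subset I ⊂ {1,...,n} with |I| = r, where Σ_I keeps the diagonal entries of Σ with index in I and zeroes the rest. In particular there are exactly binom(n,r) critical points. -/
open Matrix

/-!
Conjugating by the orthogonal `U` reduces everything to `T = D := diagonal σ`. A symmetric `M`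
with `M (D - M) = 0` satisfies `M D = M² = D M` (transpose the relation), and a matrix commuting
with a diagonal matrix with distinct entries is itself diagonal. The criticality equation then
reads `dᵢ (σᵢ - dᵢ) = 0` entrywise, so `M` keeps some of the `σᵢ` and zeroes the rest; as all
`σᵢ ≠ 0`, the set `I` of kept indices is determined by `M` and has `|I| = rk M`.
-/

namespace Matrix

variable {ι m R K : Type*}

section Zero

variable [DecidableEq ι] [Zero R]

def truncatedDiagonal (σ : ι → R) (I : Finset ι) : Matrix ι ι R :=
  diagonal fun i => if i ∈ I then σ i else 0

theorem truncatedDiagonal_injective {σ : ι → R} (hσ : ∀ i, σ i ≠ 0) :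
    Function.Injective (truncatedDiagonal σ) := by
  intro I J h
  ext i
  have := congrFun (diagonal_injective h) i
  by_cases hI : i ∈ I <;> by_cases hJ : i ∈ J <;> simp [hI, hJ, hσ i, (hσ i).symm] at this ⊢

end Zero

section CommRing

variable [Fintype ι] [CommRing R]

theorem IsSymm.mul_mul_transpose {A : Matrix ι ι R} (hA : A.IsSymm) (U : Matrix m ι R) :
    (U * A * Uᵀ).IsSymm := by
  simp only [IsSymm, transpose_mul, transpose_transpose, hA.eq, Matrix.mul_assoc]

theorem IsSymm.commute_of_mul_sub_eq_zero {M D : Matrix ι ι R} (hM : M.IsSymm) (hD : D.IsSymm)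
    (h : M * (D - M) = 0) : Commute M D := by
  have hMD : M * D = M * M := by rwa [Matrix.mul_sub, sub_eq_zero] at h
  have hDM : D * M = M * M := by
    simpa only [transpose_mul, hM.eq, hD.eq] using congrArg Matrix.transpose hMD
  exact hMD.trans hDM.symm

variable [DecidableEq ι]

theorem eq_diagonal_of_commute_diagonal [NoZeroDivisors R] {M : Matrix ι ι R} {σ : ι → R}
    (hσ : Function.Injective σ) (h : Commute M (diagonal σ)) :
    M = diagonal fun i => M i i := by
  ext i j
  obtain rfl | hij := eq_or_ne i j
  · simp
  have hentry : M i j * σ j = σ i * M i j := by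
    simpa only [mul_diagonal, diagonal_mul] using congrFun (congrFun h.eq i) j
  have : M i j * (σ j - σ i) = 0 := by rw [mul_sub, hentry, mul_comm]; exact sub_self _
  rw [diagonal_apply_ne _ hij]
  exact (mul_eq_zero.mp this).resolve_right (sub_ne_zero.mpr fun h => hij (hσ h).symm)

theorem diagonal_mul_sub_diagonal_eq_zero_iff [NoZeroDivisors R] {d σ : ι → R} :
    diagonal d * (diagonal σ - diagonal d) = 0 ↔ ∀ i, d i = 0 ∨ d i = σ i := by
  simp only [diagonal_sub, diagonal_mul_diagonal, diagonal_eq_zero, funext_iff, Pi.zero_apply,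
    mul_eq_zero, sub_eq_zero, eq_comm (a := σ _)]

theorem IsSymm.mul_sub_eq_zero_iff [NoZeroDivisors R] {σ : ι → R} (hσ : Function.Injective σ)
    {M : Matrix ι ι R} (hM : M.IsSymm) :
    M * (diagonal σ - M) = 0 ↔ ∃ I : Finset ι, M = truncatedDiagonal σ I := by
  constructor
  · intro h
    have hdiag := eq_diagonal_of_commute_diagonal hσ
      (hM.commute_of_mul_sub_eq_zero (isSymm_diagonal σ) h)
    rw [hdiag, diagonal_mul_sub_diagonal_eq_zero_iff] at h
    classical
    refine ⟨({i | M i i ≠ 0} : Finset ι), hdiag.trans (congrArg diagonal (funext fun i => ?_))⟩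
    by_cases hi : M i i = 0
    · simp [hi]
    · simpa [hi] using (h i).resolve_left hi
  · rintro ⟨I, rfl⟩
    refine diagonal_mul_sub_diagonal_eq_zero_iff.mpr fun i => ?_
    by_cases hi : i ∈ I <;> simp [hi]

theorem conj_mul_conj {U : Matrix ι ι R} (hU : Uᵀ * U = 1) (A B : Matrix ι ι R) :
    U * A * Uᵀ * (U * B * Uᵀ) = U * (A * B) * Uᵀ := by
  simp only [Matrix.mul_assoc, ← Matrix.mul_assoc Uᵀ U, hU, Matrix.one_mul]

theorem conj_inj {U : Matrix ι ι R} (hU : Uᵀ * U = 1) {A B : Matrix ι ι R} :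
    U * A * Uᵀ = U * B * Uᵀ ↔ A = B := by
  refine ⟨fun h => ?_, fun h => h ▸ rfl⟩
  simpa only [Matrix.mul_assoc, ← Matrix.mul_assoc Uᵀ U, hU, Matrix.one_mul, Matrix.mul_one] using
    congrArg (fun S => Uᵀ * S * U) h

theorem conj_eq_zero_iff {U : Matrix ι ι R} (hU : Uᵀ * U = 1) {A : Matrix ι ι R} :
    U * A * Uᵀ = 0 ↔ A = 0 := by
  simpa using conj_inj hU (B := 0)

theorem rank_conj {U : Matrix ι ι R} (hU : U * Uᵀ = 1) (A : Matrix ι ι R) :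
    (U * A * Uᵀ).rank = A.rank := by
  rw [rank_mul_eq_left_of_isUnit_det _ _ (isUnit_det_of_right_inverse (mul_eq_one_comm.mp hU)),
    rank_mul_eq_right_of_isUnit_det _ _ (isUnit_det_of_right_inverse hU)]

end CommRing

section Field

variable [Fintype ι] [DecidableEq ι] [Field K]

theorem rank_truncatedDiagonal {σ : ι → K} (hσ : ∀ i, σ i ≠ 0) (I : Finset ι) :
    (truncatedDiagonal σ I).rank = I.card := by
  classical
  rw [truncatedDiagonal, rank_diagonal, Fintype.card_subtype]
  congr 1
  ext i
  by_cases hi : i ∈ I <;> simp [hi, hσ i]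

theorem IsSymm.mul_sub_eq_zero_and_rank_eq_iff {σ : ι → K} (hσinj : Function.Injective σ)
    (hσ0 : ∀ i, σ i ≠ 0) {M : Matrix ι ι K} (hM : M.IsSymm) (r : ℕ) :
    (M * (diagonal σ - M) = 0 ∧ M.rank = r) ↔
      ∃ I : Finset ι, I.card = r ∧ M = truncatedDiagonal σ I := by
  rw [hM.mul_sub_eq_zero_iff hσinj]
  constructor
  · rintro ⟨⟨I, rfl⟩, hr⟩
    exact ⟨I, (rank_truncatedDiagonal hσ0 I).symm.trans hr, rfl⟩
  · rintro ⟨I, hI, rfl⟩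
    exact ⟨⟨I, rfl⟩, (rank_truncatedDiagonal hσ0 I).trans hI⟩

theorem IsSymm.conj_mul_sub_eq_zero_and_rank_eq_iff {σ : ι → K} (hσinj : Function.Injective σ)
    (hσ0 : ∀ i, σ i ≠ 0) {U : Matrix ι ι K} (hU : U * Uᵀ = 1) {S : Matrix ι ι K}
    (hS : S.IsSymm) (r : ℕ) :
    (S * (U * diagonal σ * Uᵀ - S) = 0 ∧ S.rank = r) ↔
      ∃ I : Finset ι, I.card = r ∧ S = U * truncatedDiagonal σ I * Uᵀ := by
  have hUU : Uᵀ * U = 1 := mul_eq_one_comm.mp hU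
  obtain ⟨M, hM, rfl⟩ : ∃ M : Matrix ι ι K, M.IsSymm ∧ U * M * Uᵀ = S :=
    ⟨Uᵀ * S * U, by simpa using hS.mul_mul_transpose Uᵀ,
      by simp only [Matrix.mul_assoc, hU, Matrix.mul_one, ← Matrix.mul_assoc U Uᵀ, Matrix.one_mul]⟩
  rw [← Matrix.sub_mul, ← Matrix.mul_sub, conj_mul_conj hUU, conj_eq_zero_iff hUU, rank_conj hU]
  simp only [conj_inj hUU]
  exact hM.mul_sub_eq_zero_and_rank_eq_iff hσinj hσ0 r

theorem ncard_setOf_isSymm_mul_sub_eq_zero_and_rank_eq {σ : ι → K}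
    (hσinj : Function.Injective σ) (hσ0 : ∀ i, σ i ≠ 0) {U : Matrix ι ι K} (hU : U * Uᵀ = 1)
    (r : ℕ) :
    {S : Matrix ι ι K | S.IsSymm ∧ S * (U * diagonal σ * Uᵀ - S) = 0 ∧ S.rank = r}.ncard =
      (Fintype.card ι).choose r := by
  have hset : {S : Matrix ι ι K | S.IsSymm ∧ S * (U * diagonal σ * Uᵀ - S) = 0 ∧ S.rank = r} =
      (fun I => U * truncatedDiagonal σ I * Uᵀ) ''
        ↑(Finset.univ.powersetCard r : Finset (Finset ι)) := by
    ext S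
    simp only [Set.mem_image, Finset.mem_coe, Finset.mem_powersetCard_univ]
    constructor
    · rintro ⟨hS, hcrit⟩
      obtain ⟨I, hI, rfl⟩ := (hS.conj_mul_sub_eq_zero_and_rank_eq_iff hσinj hσ0 hU r).mp hcrit
      exact ⟨I, hI, rfl⟩
    · rintro ⟨I, hI, rfl⟩
      have hS : (U * truncatedDiagonal σ I * Uᵀ).IsSymm :=
        (isSymm_diagonal _).mul_mul_transpose U
      exact ⟨hS, (hS.conj_mul_sub_eq_zero_and_rank_eq_iff hσinj hσ0 hU r).mpr ⟨I, hI, rfl⟩⟩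
  have hinj : Function.Injective fun I => U * truncatedDiagonal σ I * Uᵀ :=
    fun I J h => truncatedDiagonal_injective hσ0 ((conj_inj (mul_eq_one_comm.mp hU)).mp h)
  rw [hset, Set.ncard_image_of_injective _ hinj, Set.ncard_coe_finset, Finset.card_powersetCard,
    Finset.card_univ]

end Field

end Matrix

/-- Eckart–Young for symmetric matrices (critical point characterization): let
`T = U diag(σ) Uᵀ` with `U` orthogonal and `σ` a family of distinct non-zero eigenvalues.
A symmetric matrix `S` is a critical point of `S ↦ ‖T − S‖_F²` on the manifold of
symmetric matrices of rank exactly `r` (i.e. `S (T − S) = 0` and `rk S = r`) if and only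
if `S = U diag(σ_I) Uᵀ` for some `r`-subset `I`, where `σ_I` keeps the entries of `σ`
indexed by `I` and zeroes the rest. In particular there are exactly `binom(n,r)` such
critical points. -/
theorem stmt12 (n r : ℕ) (σ : Fin n → ℝ)
    (hσinj : Function.Injective σ) (hσ0 : ∀ i, σ i ≠ 0)
    (U : Matrix (Fin n) (Fin n) ℝ) (hU : U * Uᵀ = 1)
    (T : Matrix (Fin n) (Fin n) ℝ) (hT : T = U * Matrix.diagonal σ * Uᵀ) :
    (∀ S : Matrix (Fin n) (Fin n) ℝ, S.IsSymm →
      ((S * (T - S) = 0 ∧ S.rank = r) ↔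
        ∃ I : Finset (Fin n), I.card = r ∧
          S = U * Matrix.diagonal (fun i => if i ∈ I then σ i else 0) * Uᵀ)) ∧
    {S : Matrix (Fin n) (Fin n) ℝ | S.IsSymm ∧ S * (T - S) = 0 ∧ S.rank = r}.ncard
      = n.choose r := by
  subst hT
  exact ⟨fun S hS => hS.conj_mul_sub_eq_zero_and_rank_eq_iff hσinj hσ0 hU r,
    by simpa only [Fintype.card_fin] using
      ncard_setOf_isSymm_mul_sub_eq_zero_and_rank_eq hσinj hσ0 hU r⟩
end

section
/- (Gradient flow invariants for polynomial networks) Let L(α, w_1,...,w_r) = ℓ(Σ_i α_i w_i^⊗d) for a smooth ℓ : Sym^d(ℝ^n) → ℝ. Along any integral curve γ(t) of the negative gradient field of L, the quantities δ_i = α_i² − (1/d)‖w_i‖², i = 1,...,r, are constant in t. -/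
open scoped BigOperators

/-- Gradient flow invariants for polynomial networks: let
`L(α, w₁,…,w_r) = ℓ(Σᵢ αᵢ wᵢ^⊗d)` for smooth `ℓ : Sym^d(ℝ^n) → ℝ`, with parameters
packed into the Euclidean space indexed by `Fin r ⊕ Fin r × Fin n`
(`α i = p (inl i)`, `wᵢⱼ = p (inr (i,j))`). Along any integral curve `γ` of the negative
gradient field of `L`, the quantities `δᵢ = αᵢ² − (1/d)‖wᵢ‖²` are constant in `t`. -/
theorem stmt15 (n d r : ℕ) (hd : 0 < d)
    (ℓ : ((Fin d → Fin n) → ℝ) → ℝ) (hℓ : ContDiff ℝ (⊤ : ℕ∞) ℓ)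
    (L : EuclideanSpace ℝ (Fin r ⊕ Fin r × Fin n) → ℝ)
    (hL : ∀ p, L p = ℓ (fun idx =>
        ∑ i, p (Sum.inl i) * ∏ k, p (Sum.inr (i, idx k))))
    (γ : ℝ → EuclideanSpace ℝ (Fin r ⊕ Fin r × Fin n))
    (hγ : ∀ t, HasDerivAt γ (-(gradient L (γ t))) t)
    (i : Fin r) (t s : ℝ) :
    (γ t (Sum.inl i)) ^ 2 - (1 / d : ℝ) * ∑ j, (γ t (Sum.inr (i, j))) ^ 2
      = (γ s (Sum.inl i)) ^ 2 - (1 / d : ℝ) * ∑ j, (γ s (Sum.inr (i, j))) ^ 2 := by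
  classical
  have hLs : ContDiff ℝ (⊤ : ℕ∞) L := by
    have hEq : L = ℓ ∘ (fun p : EuclideanSpace ℝ (Fin r ⊕ Fin r × Fin n) =>
        fun idx : Fin d → Fin n => ∑ i, p (Sum.inl i) * ∏ k, p (Sum.inr (i, idx k))) := by
      funext p; exact hL p
    rw [hEq]
    refine hℓ.comp ?_
    apply contDiff_pi.2
    intro idx
    apply ContDiff.sum
    intro i' _
    refine ContDiff.mul ?_ ?_
    · exact (EuclideanSpace.proj (Sum.inl i' : Fin r ⊕ Fin r × Fin n) :
        EuclideanSpace ℝ (Fin r ⊕ Fin r × Fin n) →L[ℝ] ℝ).contDiff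
    · exact contDiff_prod fun k _ =>
        (EuclideanSpace.proj (Sum.inr (i', idx k) : Fin r ⊕ Fin r × Fin n) :
          EuclideanSpace ℝ (Fin r ⊕ Fin r × Fin n) →L[ℝ] ℝ).contDiff
  have hLd : Differentiable ℝ L := hLs.differentiable (by simp)
  -- coordinate derivatives of γ
  have hcoord : ∀ (x : Fin r ⊕ Fin r × Fin n) (u : ℝ),
      HasDerivAt (fun u => γ u x) (-(gradient L (γ u) x)) u := by
    intro x u
    have h := (EuclideanSpace.proj x :
      EuclideanSpace ℝ (Fin r ⊕ Fin r × Fin n) →L[ℝ] ℝ).hasFDerivAt.comp_hasDerivAt u (hγ u)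
    exact h
  -- the Euler-type identity
  have key : ∀ p : EuclideanSpace ℝ (Fin r ⊕ Fin r × Fin n),
      (d : ℝ) * p (Sum.inl i) * gradient L p (Sum.inl i)
        = ∑ j, p (Sum.inr (i, j)) * gradient L p (Sum.inr (i, j)) := by
    intro p
    set e := PiLp.continuousLinearEquiv 2 ℝ (fun _ : Fin r ⊕ Fin r × Fin n => ℝ) with he
    set v' : (Fin r ⊕ Fin r × Fin n) → ℝ := fun x =>
      Sum.elim (fun i' => if i' = i then (d : ℝ) * p (Sum.inl i) else 0)
        (fun ij => if ij.1 = i then -p (Sum.inr ij) else 0) x with hv'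
    set c' : ℝ → (Fin r ⊕ Fin r × Fin n) → ℝ := fun u x =>
      Sum.elim (fun i' => if i' = i then Real.exp (d * u) * p (Sum.inl i') else p (Sum.inl i'))
        (fun ij => if ij.1 = i then Real.exp (-u) * p (Sum.inr ij) else p (Sum.inr ij)) x with hc'
    have hcd' : HasDerivAt c' v' 0 := by
      rw [hasDerivAt_pi]
      rintro (i' | ij)
      · by_cases h : i' = i
        · subst h
          simp only [hc', hv', Sum.elim_inl, if_pos rfl]
          have := (((hasDerivAt_id (0:ℝ)).const_mul (d:ℝ)).exp).mul_const (p (Sum.inl i'))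
          simpa using this
        · simp only [hc', hv', Sum.elim_inl, if_neg h]
          exact hasDerivAt_const _ _
      · by_cases h : ij.1 = i
        · simp only [hc', hv', Sum.elim_inr, if_pos h]
          have := (((hasDerivAt_id (0:ℝ)).neg).exp).mul_const (p (Sum.inr ij))
          simpa using this
        · simp only [hc', hv', Sum.elim_inr, if_neg h]
          exact hasDerivAt_const _ _
    have hcd : HasDerivAt (fun u => e.symm (c' u)) (e.symm v') 0 :=
      (e.symm : ((Fin r ⊕ Fin r × Fin n) → ℝ) →L[ℝ]
        EuclideanSpace ℝ (Fin r ⊕ Fin r × Fin n)).hasFDerivAt.comp_hasDerivAt 0 hcd'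
    have hc0 : e.symm (c' 0) = p := by
      have : c' 0 = e p := by
        funext x
        rcases x with i' | ij <;> simp [hc'] <;> rfl
      rw [this, ContinuousLinearEquiv.symm_apply_apply]
    have happ : ∀ u x, (e.symm (c' u) : EuclideanSpace ℝ (Fin r ⊕ Fin r × Fin n)) x = c' u x := by
      intro u x; rfl
    have hconstL : ∀ u, L (e.symm (c' u)) = L p := by
      intro u
      rw [hL, hL]
      congr 1
      funext idx
      refine Finset.sum_congr rfl ?_
      intro i' _
      rw [happ]
      by_cases h : i' = i
      · subst h
        have hfac : ∀ k : Fin d, (e.symm (c' u) : EuclideanSpace ℝ _) (Sum.inr (i', idx k))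
            = Real.exp (-u) * p (Sum.inr (i', idx k)) := by
          intro k; rw [happ]; simp [hc']
        calc c' u (Sum.inl i') * ∏ k, (e.symm (c' u) : EuclideanSpace ℝ _) (Sum.inr (i', idx k))
            = (Real.exp (d * u) * p (Sum.inl i')) *
              ∏ k, (Real.exp (-u) * p (Sum.inr (i', idx k))) := by
              simp only [hc', Sum.elim_inl, if_pos rfl]
              exact congrArg _ (Finset.prod_congr rfl fun k _ => hfac k)
          _ = (Real.exp ((d:ℝ) * u) * Real.exp (-u) ^ d) *
              (p (Sum.inl i') * ∏ k, p (Sum.inr (i', idx k))) := by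
              rw [Finset.prod_mul_distrib, Finset.prod_const, Finset.card_univ, Fintype.card_fin]
              ring
          _ = p (Sum.inl i') * ∏ k, p (Sum.inr (i', idx k)) := by
              rw [← Real.exp_nat_mul, ← Real.exp_add, mul_neg, add_neg_cancel, Real.exp_zero,
                one_mul]
      · have hfac : ∀ k : Fin d, (e.symm (c' u) : EuclideanSpace ℝ _) (Sum.inr (i', idx k))
            = p (Sum.inr (i', idx k)) := by
          intro k; rw [happ]; simp [hc', h]
        simp only [hc', Sum.elim_inl, if_neg h]
        exact congrArg _ (Finset.prod_congr rfl fun k _ => hfac k)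
    have h0 : HasDerivAt (fun u => L (e.symm (c' u))) 0 0 := by
      have : (fun u => L (e.symm (c' u))) = fun _ => L p := funext hconstL
      rw [this]; exact hasDerivAt_const _ _
    have h1 : HasDerivAt (fun u => L (e.symm (c' u))) (fderiv ℝ L p (e.symm v')) 0 := by
      have hF : HasFDerivAt L (fderiv ℝ L p) (e.symm (c' 0)) := by
        rw [hc0]; exact (hLd p).hasFDerivAt
      exact hF.comp_hasDerivAt 0 hcd
    have hzero : fderiv ℝ L p (e.symm v') = 0 := h1.unique h0
    have hinner : (inner ℝ (gradient L p) (e.symm v') : ℝ) = fderiv ℝ L p (e.symm v') :=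
      InnerProductSpace.toDual_symm_apply
    have hsum : (inner ℝ (gradient L p) (e.symm v') : ℝ)
        = gradient L p (Sum.inl i) * ((d : ℝ) * p (Sum.inl i))
          + ∑ j, gradient L p (Sum.inr (i, j)) * (-p (Sum.inr (i, j))) := by
      rw [PiLp.inner_apply]
      have hv : ∀ x, (e.symm v' : EuclideanSpace ℝ (Fin r ⊕ Fin r × Fin n)) x = v' x :=
        fun x => rfl
      simp only [RCLike.inner_apply, conj_trivial, hv]
      rw [Fintype.sum_sum_type]
      congr 1
      · simp [hv', mul_ite]
        ring
      · rw [Fintype.sum_prod_type]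
        simp [hv', mul_ite, Finset.sum_ite_eq']
        exact Finset.sum_congr rfl fun j _ => mul_comm _ _
    rw [hzero] at hinner
    rw [hinner] at hsum
    have : ∑ j, gradient L p (Sum.inr (i, j)) * (-p (Sum.inr (i, j)))
        = -∑ j, p (Sum.inr (i, j)) * gradient L p (Sum.inr (i, j)) := by
      rw [← Finset.sum_neg_distrib]
      exact Finset.sum_congr rfl fun j _ => by ring
    rw [this] at hsum
    linarith [hsum]
  -- conclusion
  set f : ℝ → ℝ := fun u =>
    (γ u (Sum.inl i)) ^ 2 - (1 / d : ℝ) * ∑ j, (γ u (Sum.inr (i, j))) ^ 2 with hf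
  have hder : ∀ u, HasDerivAt f 0 u := by
    intro u
    have h1 := (hcoord (Sum.inl i) u).fun_pow 2
    have h2 : HasDerivAt (fun u => ∑ j, (γ u (Sum.inr (i, j))) ^ 2)
        (∑ j, (2:ℕ) * γ u (Sum.inr (i, j)) ^ 1 * (-(gradient L (γ u) (Sum.inr (i, j))))) u :=
      HasDerivAt.fun_sum fun j _ => (hcoord (Sum.inr (i, j)) u).fun_pow 2
    have h3 := h1.sub (h2.const_mul (1 / d : ℝ))
    convert h3 using 1
    case e'_4 => rfl
    case e'_5 => rfl
    case e'_8 => rfl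
    have hk := key (γ u)
    have hd' : (d : ℝ) ≠ 0 := Nat.cast_ne_zero.2 hd.ne'
    have hs : ∑ j, (2:ℕ) * γ u (Sum.inr (i, j)) ^ 1 * (-(gradient L (γ u) (Sum.inr (i, j))))
        = -2 * ∑ j, γ u (Sum.inr (i, j)) * gradient L (γ u) (Sum.inr (i, j)) := by
      rw [Finset.mul_sum]
      exact Finset.sum_congr rfl fun j _ => by push_cast; ring
    rw [hs, ← hk]
    push_cast
    field_simp
    ring
  exact is_const_of_deriv_eq_zero (fun u => (hder u).differentiableAt)
    (fun u => (hder u).deriv) t s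
end

section
/- Let τ_r(α, W) = Wᵀ diag(α) W for α ∈ ℝ^r, W ∈ ℝ^{r×n} with r ≥ n. If (α, W) satisfies rk(Wᵀ diag(α) W) = n, then the differential of τ_r at (α, W) is surjective onto Sym²(ℝ^n); equivalently, the branch locus of τ_r is contained in the set of symmetric matrices of rank at most n−1. -/
/-!
The `W`-directions alone already fill `Sym²`. For `Ẇ = W X` the symmetry of `M = τ(α, W)` gives
`dτ(0, Ẇ) = M X + (M X)ᵀ`; full rank makes `M` invertible, and `X = M⁻¹ A / 2` then yields any
symmetric `A`.
-/

open Matrix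

theorem Matrix.isUnit_of_rank_eq_card {n K : Type*} [Fintype n] [DecidableEq n] [Field K]
    {A : Matrix n n K} (h : A.rank = Fintype.card n) : IsUnit A := by
  rw [← mulVec_surjective_iff_isUnit, ← coe_mulVecLin, ← LinearMap.range_eq_top]
  exact Submodule.eq_top_of_finrank_eq (by rw [← rank, h, Module.finrank_fintype_fun_eq_card])

section Tau

variable {m n R : Type*} [Fintype m] [DecidableEq m] [CommRing R]

def tau (α : m → R) (W : Matrix m n R) : Matrix n n R :=
  Wᵀ * diagonal α * W

def tauDeriv (α : m → R) (W : Matrix m n R) (dα : m → R) (dW : Matrix m n R) :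
    Matrix n n R :=
  Wᵀ * diagonal dα * W + dWᵀ * diagonal α * W + Wᵀ * diagonal α * dW

theorem tau_apply (α : m → R) (W : Matrix m n R) (a b : n) :
    tau α W a b = ∑ i, α i * W i a * W i b := by
  rw [tau, mul_apply]
  simp only [mul_diagonal, transpose_apply]
  exact Finset.sum_congr rfl fun i _ => by ring

theorem tauDeriv_apply (α : m → R) (W : Matrix m n R) (dα : m → R) (dW : Matrix m n R)
    (a b : n) :
    tauDeriv α W dα dW a b =
      ∑ i, (dα i * W i a * W i b + α i * (dW i a * W i b + W i a * dW i b)) := by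
  rw [tauDeriv, Matrix.add_apply, Matrix.add_apply, mul_apply, mul_apply, mul_apply]
  simp only [mul_diagonal, transpose_apply, ← Finset.sum_add_distrib]
  exact Finset.sum_congr rfl fun i _ => by ring

theorem tau_transpose (α : m → R) (W : Matrix m n R) : (tau α W)ᵀ = tau α W := by
  simp only [tau, transpose_mul, transpose_transpose, diagonal_transpose, Matrix.mul_assoc]

theorem tauDeriv_zero_mul [Fintype n] (α : m → R) (W : Matrix m n R) (X : Matrix n n R) :
    tauDeriv α W 0 (W * X) = tau α W * X + (tau α W * X)ᵀ := by
  rw [transpose_mul, tau_transpose, tauDeriv, diagonal_zero', Matrix.mul_zero, Matrix.zero_mul,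
    zero_add, transpose_mul, add_comm]
  simp only [tau, Matrix.mul_assoc]

theorem exists_tauDeriv_eq_of_isUnit [Fintype n] [DecidableEq n] [Invertible (2 : R)]
    {α : m → R} {W : Matrix m n R} (hτ : IsUnit (tau α W)) {A : Matrix n n R} (hA : Aᵀ = A) :
    ∃ dα dW, tauDeriv α W dα dW = A := by
  obtain ⟨X, hX⟩ : ∃ X, tau α W * X = (⅟2 : R) • A :=
    ⟨(tau α W)⁻¹ * ((⅟2 : R) • A),
      mul_nonsing_inv_cancel_left _ _ ((isUnit_iff_isUnit_det _).1 hτ)⟩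
  refine ⟨0, W * X, ?_⟩
  rw [tauDeriv_zero_mul, hX, transpose_smul, hA, ← add_smul, ← two_mul, mul_invOf_self, one_smul]

end Tau

theorem stmt17_general (n r : ℕ) (α : Fin r → ℝ) (W : Fin r → Fin n → ℝ)
    (hrank : (Matrix.of fun a b => ∑ i, α i * W i a * W i b).rank = n) :
    ∀ A : Fin n → Fin n → ℝ, (∀ a b, A a b = A b a) →
      ∃ (da : Fin r → ℝ) (dW : Fin r → Fin n → ℝ), ∀ a b,
        (∑ i, (da i * W i a * W i b
            + α i * (dW i a * W i b + W i a * dW i b))) = A a b := by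
  intro A hA
  have hτ : Matrix.of (fun a b => ∑ i, α i * W i a * W i b) = tau α W :=
    Matrix.ext fun a b => (tau_apply α W a b).symm
  rw [hτ] at hrank
  have hτ_unit := isUnit_of_rank_eq_card (hrank.trans (Fintype.card_fin n).symm)
  obtain ⟨da, dW, hd⟩ := exists_tauDeriv_eq_of_isUnit hτ_unit
    (A := Matrix.of A) (Matrix.ext fun a b => hA b a)
  exact ⟨da, dW, fun a b => by rw [← tauDeriv_apply α W da dW a b, hd]; rfl⟩

/-- Let `τ_r(α, W) = Wᵀ diag(α) W` with `r ≥ n` and `W` given by its rows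
`W i : Fin n → ℝ`. If `rk(Wᵀ diag(α) W) = n`, then the differential of `τ_r` at
`(α, W)`, namely `(α̇, Ẇ) ↦ Wᵀ diag(α̇) W + Ẇᵀ diag(α) W + Wᵀ diag(α) Ẇ`, is surjective
onto the symmetric matrices `Sym²(ℝ^n)`. -/
theorem stmt17 (n r : ℕ) (hr : n ≤ r) (α : Fin r → ℝ) (W : Fin r → Fin n → ℝ)
    (hrank : (Matrix.of fun a b => ∑ i, α i * W i a * W i b).rank = n) :
    ∀ A : Fin n → Fin n → ℝ, (∀ a b, A a b = A b a) →
      ∃ (da : Fin r → ℝ) (dW : Fin r → Fin n → ℝ), ∀ a b,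
        (∑ i, (da i * W i a * W i b
            + α i * (dW i a * W i b + W i a * dW i b))) = A a b :=
  stmt17_general n r α W hrank
end

section
/- Let τ_r(α, w_1,...,w_r) = Σ_i α_i w_i^⊗d map into Sym^d(ℝ^n). If the differential of τ_r at (α, W) has rank strictly less than dim Sym^d(ℝ^n) = binom(n+d−1,d), then there exists a non-zero homogeneous polynomial P of degree d in n variables such that ∇P(w_i) = 0 for every i with α_i ≠ 0. -/
/-!
Symmetric `d`-tensors on `ℝⁿ` are the functions on `Sym (Fin n) d`, a space of dimension
`binom(n+d-1, d)`. If the range of `Φ` spans less than that, some non-zero symmetric tensor `T`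
is orthogonal to it. Let `P = ⟨T, X^⊗d⟩`. By the Leibniz rule, pairing `T` with
`Φ(0, eᵢ ⊗ eⱼ)` gives `αᵢ ∂ⱼP(wᵢ)`, so these derivatives vanish when `αᵢ ≠ 0`; and `P ≠ 0`
because the coefficient of `X^s` in `P` is `T s` times the number of orderings of `s`.
-/

open MvPolynomial Module

theorem Derivation.leibniz_finsetProd {R A M ι : Type*} [CommSemiring R] [CommSemiring A]
    [Algebra R A] [AddCommMonoid M] [Module A M] [Module R M] [DecidableEq ι]
    (D : Derivation R A M) (s : Finset ι) (f : ι → A) :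
    D (∏ i ∈ s, f i) = ∑ i ∈ s, (∏ j ∈ s.erase i, f j) • D (f i) := by
  induction s using Finset.induction_on with
  | empty => simp
  | insert a s ha ih =>
    rw [Finset.prod_insert ha, Derivation.leibniz, ih, Finset.sum_insert ha, Finset.erase_insert ha,
      Finset.smul_sum, add_comm]
    congr 1
    refine Finset.sum_congr rfl fun i hi => ?_
    have hia : i ≠ a := ne_of_mem_of_not_mem hi ha
    rw [Finset.erase_insert_of_ne hia.symm,
      Finset.prod_insert fun h => ha (Finset.mem_of_mem_erase h), mul_smul]

theorem LinearMap.exists_ne_zero_forall_mem_apply_eq_zero_of_finrank_lt {K V M : Type*} [Field K]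
    [AddCommGroup V] [Module K V] [FiniteDimensional K V] [AddCommGroup M] [Module K M]
    (B : V →ₗ[K] M →ₗ[K] K) (W : Submodule K M) [FiniteDimensional K W]
    (h : finrank K W < finrank K V) : ∃ v ≠ 0, ∀ x ∈ W, B v x = 0 := by
  have hker : LinearMap.ker (B.compl₂ W.subtype) ≠ ⊥ :=
    LinearMap.ker_ne_bot_of_finrank_lt (by rwa [Subspace.dual_finrank_eq])
  obtain ⟨v, hv, hv0⟩ := Submodule.exists_mem_ne_zero_of_ne_bot hker
  exact ⟨v, hv0, fun x hx => LinearMap.congr_fun (LinearMap.mem_ker.mp hv) ⟨x, hx⟩⟩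

namespace Sym

variable {α : Type*} {d : ℕ}

def ofFn (f : Fin d → α) : Sym α d := ⟨Finset.univ.val.map f, by simp⟩

theorem ofFn_cons (a : α) (f : Fin d → α) :
    ofFn (Fin.cons a f : Fin (d + 1) → α) = a ::ₛ ofFn f := by
  ext1
  show (Finset.univ : Finset (Fin (d + 1))).val.map _ = a ::ₘ Finset.univ.val.map f
  simp [List.ofFn_succ]

theorem ofFn_surjective : Function.Surjective (ofFn : (Fin d → α) → Sym α d) := by
  induction d with
  | zero => exact fun s => ⟨Fin.elim0, Subsingleton.elim _ _⟩
  | succ d ih =>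
    intro s
    obtain ⟨a, t, rfl⟩ := s.exists_eq_cons_of_succ
    obtain ⟨f, rfl⟩ := ih t
    exact ⟨Fin.cons a f, ofFn_cons a f⟩

end Sym

namespace MvPolynomial

variable {σ R : Type*} [CommSemiring R] [DecidableEq σ]

theorem prod_map_X_eq_monomial (M : Multiset σ) :
    (M.map X).prod = monomial (Multiset.toFinsupp M) (1 : R) := by
  induction M using Multiset.induction_on with
  | empty => simp
  | cons a M ih =>
    rw [Multiset.map_cons, Multiset.prod_cons, ih, ← Multiset.singleton_add, Multiset.toFinsupp_add,
      Multiset.toFinsupp_singleton, X, monomial_mul, one_mul]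

theorem prod_X_eq_monomial_ofFn {d : ℕ} (f : Fin d → σ) :
    ∏ k, X (f k) = monomial (Multiset.toFinsupp (Sym.ofFn f : Multiset σ)) (1 : R) := by
  rw [← prod_map_X_eq_monomial, Finset.prod_eq_multiset_prod]
  exact congrArg _ (Multiset.map_map X f _).symm

end MvPolynomial

section TensorPolynomial

open Finset

variable {σ R : Type*} [Fintype σ] [CommRing R] {d : ℕ}

-- The polynomial `⟨T, X^⊗d⟩` attached to a tensor `T`.
noncomputable def tensorPolynomial (T : (Fin d → σ) → R) : MvPolynomial σ R :=
  ∑ f, T f • ∏ k, X (f k)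

theorem isHomogeneous_tensorPolynomial (T : (Fin d → σ) → R) :
    (tensorPolynomial T).IsHomogeneous d := by
  refine IsHomogeneous.sum _ _ _ fun f _ => ?_
  have h := IsHomogeneous.prod univ (fun k => X (f k)) (fun _ => 1)
    (fun k _ => isHomogeneous_X R (f k))
  rw [smul_eq_C_mul]
  simpa using (isHomogeneous_C σ (T f)).mul h

theorem eval_pderiv_tensorPolynomial [DecidableEq σ] (T : (Fin d → σ) → R) (j : σ) (v : σ → R) :
    eval v (pderiv j (tensorPolynomial T)) =
      ∑ f, T f * ∑ m, (Pi.single j 1 : σ → R) (f m) * ∏ k ∈ univ.erase m, v (f k) := by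
  simp [tensorPolynomial, Derivation.leibniz_finsetProd, pderiv_X, Pi.single_apply, apply_ite,
    mul_comm]

theorem tensorPolynomial_comp_ofFn_ne_zero [DecidableEq σ] [IsDomain R] [CharZero R]
    {g : Sym σ d → R} (hg : g ≠ 0) : tensorPolynomial (g ∘ Sym.ofFn) ≠ 0 := by
  have hsum : tensorPolynomial (g ∘ Sym.ofFn) =
      ∑ s, (#{f | Sym.ofFn f = s} • g s) • monomial (Multiset.toFinsupp (s : Multiset σ)) 1 := by
    rw [tensorPolynomial, ← sum_fiberwise univ Sym.ofFn]
    refine sum_congr rfl fun s _ => ?_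
    rw [smul_assoc, ← sum_const]
    refine sum_congr rfl fun f hf => ?_
    obtain rfl := (mem_filter.mp hf).2
    simp [prod_X_eq_monomial_ofFn]
  have hli := (basisMonomials σ R).linearIndependent.comp _
    (Multiset.toFinsupp.injective.comp Subtype.val_injective : Function.Injective
      fun s : Sym σ d => Multiset.toFinsupp (s : Multiset σ))
  intro h0
  refine hg (funext fun s => ?_)
  rw [Pi.zero_apply]
  have hs := Fintype.linearIndependent_iff.mp hli _ (by simpa [coe_basisMonomials, hsum] using h0) s
  obtain ⟨f, rfl⟩ := Sym.ofFn_surjective s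
  have hcard : #{f' | Sym.ofFn f' = Sym.ofFn f} ≠ 0 :=
    card_ne_zero_of_mem (mem_filter.mpr ⟨mem_univ f, rfl⟩)
  simpa [hcard] using hs

end TensorPolynomial

/-- Let `τ_r(α, w₁,…,w_r) = Σᵢ αᵢ wᵢ^⊗d` map into `Sym^d(ℝ^n)`, and let `Φ` be its
differential at `(α, w)`: `Φ(α̇, ẇ) = Σᵢ α̇ᵢ wᵢ^⊗d + Σᵢ αᵢ sym(wᵢ^⊗(d−1) ⊗ ẇᵢ)`.
If the rank of `Φ` (the dimension of the span of its range) is strictly less than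
`dim Sym^d(ℝ^n) = binom(n+d−1, d)`, then there is a non-zero homogeneous polynomial `P`
of degree `d` in `n` variables with `∇P(wᵢ) = 0` for every `i` with `αᵢ ≠ 0`. -/
theorem stmt18 (n d r : ℕ) (α : Fin r → ℝ) (w : Fin r → Fin n → ℝ)
    (Φ : (Fin r → ℝ) × (Fin r → Fin n → ℝ) → ((Fin d → Fin n) → ℝ))
    (hΦ : ∀ da dw, Φ (da, dw) = fun idx =>
        (∑ i, da i * ∏ k, w i (idx k)) +
        ∑ i, α i * ∑ m : Fin d, dw i (idx m) * ∏ k ∈ Finset.univ.erase m, w i (idx k))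
    (hrank : Module.finrank ℝ (Submodule.span ℝ (Set.range Φ)) < (n + d - 1).choose d) :
    ∃ P : MvPolynomial (Fin n) ℝ, P ≠ 0 ∧ P.IsHomogeneous d ∧
      ∀ i, α i ≠ 0 → ∀ j, MvPolynomial.eval (w i) (MvPolynomial.pderiv j P) = 0 := by
  obtain ⟨g, hg0, hg⟩ := LinearMap.exists_ne_zero_forall_mem_apply_eq_zero_of_finrank_lt
    ((dotProductBilin ℝ ℝ).flip ∘ₗ LinearMap.funLeft ℝ ℝ (Sym.ofFn (α := Fin n) (d := d)))
    (Submodule.span ℝ (Set.range Φ))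
    (by rwa [finrank_fintype_fun_eq_card, Sym.card_sym_eq_choose, Fintype.card_fin])
  refine ⟨tensorPolynomial (g ∘ Sym.ofFn), tensorPolynomial_comp_ofFn_ne_zero hg0,
    isHomogeneous_tensorPolynomial _, fun i hi j => ?_⟩
  have hΦij : Φ (0, Pi.single i (Pi.single j 1)) = fun f =>
      α i * ∑ m, (Pi.single j 1 : Fin n → ℝ) (f m) * ∏ k ∈ Finset.univ.erase m, w i (f k) := by
    funext f
    simp only [hΦ, Pi.zero_apply, zero_mul, Finset.sum_const_zero, zero_add]
    rw [Finset.sum_eq_single i (fun b _ hb => by simp [hb]) (by simp), Pi.single_eq_same]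
  have hpair := hg _ (Submodule.subset_span ⟨(0, Pi.single i (Pi.single j 1)), rfl⟩)
  rw [eval_pderiv_tensorPolynomial]
  refine (mul_eq_zero.mp ?_).resolve_left hi
  rw [← hpair, hΦij]
  simp [dotProduct, Finset.mul_sum, mul_comm, mul_left_comm]
end
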